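/- Every finite split graph is permutationally 1-11-representable. -/

import Mathlib

/-- The subsequence of `w` consisting of all occurrences of `x` and `y`. -/
def restrictWord {V : Type*} [DecidableEq V] (w : List V) (x y : V) : List V :=
  w.filter (fun z => decide (z = x ∨ z = y))

/-- The number of occurrences of the consecutive pattern 11 in a word:
the number of indices `i` such that the `i`-th and `(i+1)`-th letters are equal. -/
def pattern11Count {V : Type*} [DecidableEq V] (l : List V) : ℕ :=
  ((l.zip l.tail).filter (fun p => decide (p.1 = p.2))).length

/-- A word `w` over `V` `k`-11-represents the simple graph `G` if every vertex occurs in `w`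
and, for all distinct `x y`, `xy` is an edge iff `w|_{x,y}` has at most `k` occurrences of
the pattern 11. -/
def Represents {V : Type*} [DecidableEq V] (k : ℕ) (w : List V) (G : SimpleGraph V) : Prop :=
  (∀ v : V, v ∈ w) ∧
  ∀ x y : V, x ≠ y → (G.Adj x y ↔ pattern11Count (restrictWord w x y) ≤ k)

/-- A graph is `k`-11-representable if some word `k`-11-represents it. -/
def Representable {V : Type*} [DecidableEq V] (k : ℕ) (G : SimpleGraph V) : Prop :=
  ∃ w : List V, Represents k w G

/-- A word that is a permutation of the vertex set: each vertex occurs exactly once. -/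
def IsPermWord {V : Type*} (p : List V) : Prop :=
  p.Nodup ∧ ∀ v : V, v ∈ p

/-- A graph is permutationally `k`-11-representable if some concatenation of permutations
of the vertex set `k`-11-represents it. -/
def PermRepresentable {V : Type*} [DecidableEq V] (k : ℕ) (G : SimpleGraph V) : Prop :=
  ∃ ps : List (List V), (∀ p ∈ ps, IsPermWord p) ∧ Represents k ps.flatten G

/-!
Each permutation is obtained by sorting the vertices by a key, so the restriction of the
concatenated word to `{x, y}` is a sequence of blocks `xy` and `yx`, and its number of 11's is
the number of times the relative order of `x` and `y` changes from one permutation to the next.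
The clique `A` keeps one fixed order throughout, so its pairs see no change. The word starts
with two permutations putting the independent set in front of `A`, first in increasing and
then in decreasing order; as the later permutations restore the increasing order, two
independent vertices change order at least twice. Then the independent vertices sweep from
left to right through `A`; right after passing a vertex `a` of `A`, each non-neighbour of `a`
steps back in front of it once more, so the order of `a` and an independent vertex `b` changes
once if they are adjacent and at least twice otherwise.
-/

namespace List

variable {α : Type*} [DecidableEq α]

def changeCount : List α → ℕ
  | [] => 0
  | [_] => 0
  | a :: b :: l => (if a = b then 0 else 1) + changeCount (b :: l)

theorem changeCount_cons_cons (a b : α) (l : List α) :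
    changeCount (a :: b :: l) = (if a = b then 0 else 1) + changeCount (b :: l) := rfl

theorem changeCount_le_changeCount_cons (a : α) : ∀ l : List α,
    changeCount l ≤ changeCount (a :: l)
  | [] => le_rfl
  | _ :: _ => by rw [changeCount_cons_cons]; omega

theorem changeCount_cons_le_add (a b : α) : ∀ l : List α,
    changeCount (a :: l) ≤ (if a = b then 0 else 1) + changeCount (b :: l)
  | [] => Nat.zero_le _
  | c :: l => by
    simp only [changeCount_cons_cons]
    split_ifs <;> first | omega | simp_all

theorem Sublist.changeCount_cons_le {l₁ l₂ : List α} (h : l₁ <+ l₂) (a : α) :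
    changeCount (a :: l₁) ≤ changeCount (a :: l₂) := by
  induction h generalizing a with
  | slnil => exact le_rfl
  | cons b _ ih =>
    exact (changeCount_cons_le_add a b _).trans (Nat.add_le_add_left (ih b) _)
  | cons_cons b _ ih =>
    rw [changeCount_cons_cons, changeCount_cons_cons]
    exact Nat.add_le_add_left (ih b) _

theorem Sublist.changeCount_le {l₁ l₂ : List α} (h : l₁ <+ l₂) :
    changeCount l₁ ≤ changeCount l₂ := by
  induction h with
  | slnil => exact le_rfl
  | cons b _ ih => exact ih.trans (changeCount_le_changeCount_cons b _)
  | cons_cons b h _ => exact h.changeCount_cons_le b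

theorem two_le_changeCount_of_sublist {a b : α} {l : List α} (hab : a ≠ b)
    (h : [a, b, a] <+ l) : 2 ≤ changeCount l := by
  simpa [changeCount, hab, hab.symm] using h.changeCount_le

theorem changeCount_eq_zero_of_forall_eq {a : α} : ∀ {l : List α}, (∀ b ∈ l, b = a) →
    changeCount l = 0
  | [], _ => rfl
  | [_], _ => rfl
  | b :: c :: l, h => by
    rw [changeCount_cons_cons, if_pos ((h b (by simp)).trans (h c (by simp)).symm),
      changeCount_eq_zero_of_forall_eq fun d hd => h d (mem_cons_of_mem b hd)]

theorem changeCount_le_one_of_pairwise_le : ∀ {l : List Bool}, l.Pairwise (· ≤ ·) →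
    changeCount l ≤ 1
  | [], _ => Nat.zero_le _
  | [_], _ => Nat.zero_le _
  | a :: b :: l, h => by
    obtain ⟨hab, hbl⟩ := pairwise_cons.1 h
    rw [changeCount_cons_cons]
    split_ifs with hab'
    · exact (Nat.zero_add _).trans_le (changeCount_le_one_of_pairwise_le hbl)
    · have hb : b = true := (Bool.lt_iff.1 ((hab b mem_cons_self).lt_of_ne hab')).2
      rw [changeCount_eq_zero_of_forall_eq (a := true)]
      rintro c (_ | ⟨_, hc⟩)
      · exact hb
      · exact Bool.le_iff_imp.1 (hb ▸ (pairwise_cons.1 hbl).1 c hc) rfl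

theorem changeCount_map_of_injective {β : Type*} [DecidableEq β] {f : α → β}
    (hf : Function.Injective f) : ∀ l : List α, changeCount (l.map f) = changeCount l
  | [] => rfl
  | [_] => rfl
  | a :: b :: l => by
    simp only [map_cons, changeCount_cons_cons, hf.eq_iff]
    rw [← map_cons, changeCount_map_of_injective hf (b :: l)]

end List

open List

section Keys

variable {V α : Type*} [LinearOrder α]

def precedenceSeq (κs : List (V → α)) (x y : V) : List Bool :=
  κs.map fun κ => decide (κ x < κ y)

theorem changeCount_precedenceSeq_comm {κs : List (V → α)}
    (hκs : ∀ κ ∈ κs, Function.Injective κ) {x y : V} (hxy : x ≠ y) :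
    (precedenceSeq κs y x).changeCount = (precedenceSeq κs x y).changeCount := by
  have hnot : precedenceSeq κs y x = (precedenceSeq κs x y).map not := by
    simp only [precedenceSeq, map_map]
    refine map_congr_left fun κ hκ => ?_
    rcases ((hκs κ hκ).ne hxy).lt_or_gt with h | h <;> simp [h, h.not_gt]
  rw [hnot, changeCount_map_of_injective Bool.not_injective]

variable [Fintype V]

noncomputable def sortByKey (κ : V → α) : List V :=
  Finset.univ.toList.mergeSort fun u v => decide (κ u ≤ κ v)

theorem isPermWord_sortByKey (κ : V → α) : IsPermWord (sortByKey κ) :=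
  ⟨(mergeSort_perm _ _).nodup_iff.2 (Finset.nodup_toList _), by simp [sortByKey]⟩

theorem pairwise_sortByKey {κ : V → α} (hκ : Function.Injective κ) :
    (sortByKey κ).Pairwise (κ · < κ ·) := by
  have hsorted := pairwise_mergeSort (le := fun u v => decide (κ u ≤ κ v))
    (fun _ _ _ huv hvw => by simpa using (of_decide_eq_true huv).trans (of_decide_eq_true hvw))
    (fun u v => by simpa using le_total (κ u) (κ v)) Finset.univ.toList
  exact (hsorted.and (isPermWord_sortByKey κ).1).imp fun ⟨hle, hne⟩ =>
    (of_decide_eq_true hle).lt_of_ne (hκ.ne hne)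

end Keys

section Words

variable {V : Type*} [DecidableEq V]

theorem pattern11Count_cons_cons (a b : V) (l : List V) :
    pattern11Count (a :: b :: l) = (if a = b then 1 else 0) + pattern11Count (b :: l) := by
  by_cases h : a = b <;> simp [pattern11Count, zip_cons_cons, h, Nat.add_comm]

theorem restrictWord_comm (w : List V) (x y : V) : restrictWord w x y = restrictWord w y x := by
  simp only [restrictWord, or_comm]

theorem restrictWord_flatten (ws : List (List V)) (x y : V) :
    restrictWord ws.flatten x y = (ws.map (restrictWord · x y)).flatten :=
  filter_flatten

def orderedPair (x y : V) (b : Bool) : List V := if b then [x, y] else [y, x]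

theorem pattern11Count_flatten_orderedPair {x y : V} (hxy : x ≠ y) :
    ∀ bs : List Bool, pattern11Count (bs.map (orderedPair x y)).flatten = bs.changeCount
  | [] => rfl
  | [b] => by cases b <;> simp [orderedPair, pattern11Count, changeCount, hxy, hxy.symm]
  | b :: c :: bs => by
    have ih := pattern11Count_flatten_orderedPair hxy (c :: bs)
    cases b <;> cases c <;>
      simp_all [orderedPair, pattern11Count_cons_cons, changeCount_cons_cons, hxy.symm]

variable {α : Type*} [LinearOrder α]

theorem restrictWord_eq_of_pairwise {κ : V → α} {p : List V}
    (hp : IsPermWord p) (hκ : p.Pairwise (κ · < κ ·)) {x y : V} (hxy : κ x < κ y) :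
    restrictWord p x y = [x, y] := by
  have hne : x ≠ y := ne_of_apply_ne κ hxy.ne
  refine Perm.eq_of_pairwise (fun a b _ _ hab hba => absurd (hab.trans hba) (lt_irrefl _))
    (hκ.filter _) (by simpa using hxy) ?_
  refine (perm_ext_iff_of_nodup (hp.1.filter _) (by simpa using hne)).2 fun z => ?_
  simp [hp.2]

variable [Fintype V]

theorem restrictWord_sortByKey {κ : V → α} (hκ : Function.Injective κ) {x y : V}
    (hxy : x ≠ y) :
    restrictWord (sortByKey κ) x y = orderedPair x y (κ x < κ y) := by
  rcases (hκ.ne hxy).lt_or_gt with h | h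
  · simp [orderedPair, h,
      restrictWord_eq_of_pairwise (isPermWord_sortByKey κ) (pairwise_sortByKey hκ) h]
  · rw [restrictWord_comm]
    simp [orderedPair, h.not_gt,
      restrictWord_eq_of_pairwise (isPermWord_sortByKey κ) (pairwise_sortByKey hκ) h]

theorem pattern11Count_restrictWord_flatten_sortByKey {κs : List (V → α)}
    (hκs : ∀ κ ∈ κs, Function.Injective κ) {x y : V} (hxy : x ≠ y) :
    pattern11Count (restrictWord (κs.map sortByKey).flatten x y)
      = (precedenceSeq κs x y).changeCount := by
  rw [restrictWord_flatten, map_map, ← pattern11Count_flatten_orderedPair hxy, precedenceSeq,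
    map_map]
  congr 2
  exact map_congr_left fun κ hκ => restrictWord_sortByKey (hκs κ hκ) hxy

theorem permRepresentable_of_precedenceSeq (k : ℕ) (G : SimpleGraph V) (κs : List (V → α))
    (hne : κs ≠ []) (hκs : ∀ κ ∈ κs, Function.Injective κ)
    (hG : ∀ x y, x ≠ y → (G.Adj x y ↔ (precedenceSeq κs x y).changeCount ≤ k)) :
    PermRepresentable k G := by
  refine ⟨κs.map sortByKey, by simp [isPermWord_sortByKey], fun v => ?_, fun x y hxy => ?_⟩
  · obtain ⟨κ, hκ⟩ := exists_mem_of_ne_nil κs hne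
    exact mem_flatten.2 ⟨_, mem_map_of_mem hκ, (isPermWord_sortByKey κ).2 v⟩
  · rw [pattern11Count_restrictWord_flatten_sortByKey hκs hxy]
    exact hG x y hxy

end Words

section SplitKeys

variable {V : Type*} [Fintype V]

noncomputable def vertexRank (v : V) : ℕ := Fintype.equivFin V v

theorem vertexRank_injective : Function.Injective (vertexRank (V := V)) :=
  fun _ _ h => (Fintype.equivFin V).injective (Fin.ext h)

theorem vertexRank_lt_card (v : V) : vertexRank v < Fintype.card V :=
  (Fintype.equivFin V v).isLt

open Classical in
/-- The vertices of `A` occupy the odd first coordinates `2 * rank + 1`; a vertex outside `A`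
with slot `s` sits between the vertices of `A` of rank `< s` and those of rank `≥ s`, and
vertices sharing a slot are ordered by `tie`. -/
noncomputable def splitKey (A : Set V) (slot : V → ℕ) (tie : V → ℤ) (v : V) : ℕ ×ₗ ℤ :=
  if v ∈ A then toLex (2 * vertexRank v + 1, 0) else toLex (2 * slot v, tie v)

open Classical in
/-- At step `2ℓ` every vertex outside `A` sits just after the vertex of `A` of rank `ℓ`; at
step `2ℓ + 1` it jumps back in front of it if the two are not adjacent. -/
noncomputable def sweepSlot (G : SimpleGraph V) (A : Set V) (t : ℕ) (b : V) : ℕ :=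
  if t % 2 = 1 ∧ ∃ a ∈ A, vertexRank a = t / 2 ∧ ¬G.Adj a b then t / 2 else t / 2 + 1

noncomputable def splitKeys (G : SimpleGraph V) (A : Set V) : List (V → ℕ ×ₗ ℤ) :=
  splitKey A (fun _ => 0) (fun v => vertexRank v) ::
    splitKey A (fun _ => 0) (fun v => -vertexRank v) ::
      (range (2 * Fintype.card V)).map fun t =>
        splitKey A (sweepSlot G A t) (fun v => vertexRank v)

variable {G : SimpleGraph V} {A : Set V} {slot : V → ℕ} {tie : V → ℤ} {x y : V}

theorem splitKey_injective (htie : Function.Injective tie) :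
    Function.Injective (splitKey A slot tie) := by
  intro u v huv
  by_cases hu : u ∈ A <;> by_cases hv : v ∈ A <;>
    simp only [splitKey, hu, hv, if_true, if_false, toLex_inj, Prod.ext_iff] at huv
  · exact vertexRank_injective (by omega)
  · omega
  · omega
  · exact htie huv.2

theorem splitKey_lt_splitKey_iff_of_mem (hx : x ∈ A) (hy : y ∈ A) :
    splitKey A slot tie x < splitKey A slot tie y ↔ vertexRank x < vertexRank y := by
  simp only [splitKey, hx, hy, if_true, Prod.Lex.toLex_lt_toLex]
  omega

theorem splitKey_lt_splitKey_iff_of_mem_of_notMem (hx : x ∈ A) (hy : y ∉ A) :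
    splitKey A slot tie x < splitKey A slot tie y ↔ vertexRank x < slot y := by
  simp only [splitKey, hx, hy, if_true, if_false, Prod.Lex.toLex_lt_toLex]
  omega

theorem splitKey_lt_splitKey_iff_of_notMem (hx : x ∉ A) (hy : y ∉ A)
    (hslot : slot x = slot y) :
    splitKey A slot tie x < splitKey A slot tie y ↔ tie x < tie y := by
  simp [splitKey, hx, hy, Prod.Lex.toLex_lt_toLex, hslot]

theorem lt_sweepSlot_iff (hx : x ∈ A) (t : ℕ) (b : V) :
    vertexRank x < sweepSlot G A t b ↔
      vertexRank x ≤ t / 2 ∧ ¬(t = 2 * vertexRank x + 1 ∧ ¬G.Adj x b) := by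
  unfold sweepSlot
  split_ifs with h
  · obtain ⟨hodd, a, -, hrank, hnadj⟩ := h
    refine ⟨fun hlt => ⟨hlt.le, fun ⟨ht, _⟩ => by omega⟩,
      fun ⟨hle, hnot⟩ => hle.lt_of_ne fun hr => hnot ?_⟩
    obtain rfl : a = x := vertexRank_injective (hrank.trans hr.symm)
    exact ⟨by omega, hnadj⟩
  · refine ⟨fun hlt => ⟨by omega, fun ⟨ht, hnadj⟩ => h ⟨by omega, x, hx, by omega, hnadj⟩⟩,
      fun ⟨hle, _⟩ => by omega⟩

theorem exists_eq_splitKey_of_mem_splitKeys {κ : V → ℕ ×ₗ ℤ} (hκ : κ ∈ splitKeys G A) :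
    ∃ slot tie, Function.Injective tie ∧ κ = splitKey A slot tie := by
  have hrank : Function.Injective fun v : V => (vertexRank v : ℤ) :=
    Nat.cast_injective.comp vertexRank_injective
  simp only [splitKeys, mem_cons, mem_map, mem_range] at hκ
  rcases hκ with rfl | rfl | ⟨t, -, rfl⟩
  · exact ⟨_, _, hrank, rfl⟩
  · exact ⟨_, _, neg_injective.comp hrank, rfl⟩
  · exact ⟨_, _, hrank, rfl⟩

theorem injective_of_mem_splitKeys {κ : V → ℕ ×ₗ ℤ} (hκ : κ ∈ splitKeys G A) :
    Function.Injective κ := by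
  obtain ⟨slot, tie, htie, rfl⟩ := exists_eq_splitKey_of_mem_splitKeys hκ
  exact splitKey_injective htie

theorem changeCount_precedenceSeq_splitKeys_of_mem (hx : x ∈ A) (hy : y ∈ A) :
    (precedenceSeq (splitKeys G A) x y).changeCount = 0 := by
  refine changeCount_eq_zero_of_forall_eq (a := decide (vertexRank x < vertexRank y)) ?_
  simp only [precedenceSeq, mem_map]
  rintro _ ⟨κ, hκ, rfl⟩
  obtain ⟨slot, tie, -, rfl⟩ := exists_eq_splitKey_of_mem_splitKeys hκ
  simp [splitKey_lt_splitKey_iff_of_mem hx hy]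

theorem precedenceSeq_splitKeys_of_mem_of_notMem (hx : x ∈ A) (hy : y ∉ A) :
    precedenceSeq (splitKeys G A) x y =
      false :: false :: (range (2 * Fintype.card V)).map fun t =>
        decide (vertexRank x < sweepSlot G A t y) := by
  simp [precedenceSeq, splitKeys, splitKey_lt_splitKey_iff_of_mem_of_notMem hx hy]

theorem adj_iff_changeCount_precedenceSeq_splitKeys_le_one (hx : x ∈ A) (hy : y ∉ A) :
    G.Adj x y ↔ (precedenceSeq (splitKeys G A) x y).changeCount ≤ 1 := by
  rw [precedenceSeq_splitKeys_of_mem_of_notMem hx hy]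
  refine ⟨fun hadj => changeCount_le_one_of_pairwise_le ?_, fun h => by_contra fun hadj => ?_⟩
  · refine pairwise_cons.2 ⟨fun _ _ => Bool.false_le _,
      pairwise_cons.2 ⟨fun _ _ => Bool.false_le _, ?_⟩⟩
    refine pairwise_map.2 (pairwise_lt_range.imp fun hst => ?_)
    simp only [lt_sweepSlot_iff hx, hadj, not_true_eq_false, and_false, not_false_eq_true,
      and_true, Bool.le_iff_imp, decide_eq_true_eq]
    omega
  · have hsteps : [2 * vertexRank x, 2 * vertexRank x + 1] <+ range (2 * Fintype.card V) := by
      refine Sublist.trans ?_ (range_sublist.2 (Nat.mul_le_mul_left 2 (vertexRank_lt_card x)))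
      simp [Nat.mul_succ, range_succ]
    have hafter : decide (vertexRank x < sweepSlot G A (2 * vertexRank x) y) = true := by
      simp [lt_sweepSlot_iff hx]
    have hbefore : decide (vertexRank x < sweepSlot G A (2 * vertexRank x + 1) y) = false := by
      simp [lt_sweepSlot_iff hx, hadj]
    have hdip := hsteps.map fun t => decide (vertexRank x < sweepSlot G A t y)
    simp only [map_cons, map_nil, hafter, hbefore] at hdip
    have := two_le_changeCount_of_sublist Bool.false_ne_true (.cons_cons false (.cons false hdip))
    omega

variable (G) in
theorem two_le_changeCount_precedenceSeq_splitKeys (hx : x ∉ A) (hy : y ∉ A) (hxy : x ≠ y) :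
    2 ≤ (precedenceSeq (splitKeys G A) x y).changeCount := by
  have hne : vertexRank x ≠ vertexRank y := vertexRank_injective.ne hxy
  have hsweep : sweepSlot G A 0 x = sweepSlot G A 0 y := by simp [sweepSlot]
  refine two_le_changeCount_of_sublist (a := decide (vertexRank x < vertexRank y))
    (b := decide (vertexRank y < vertexRank x)) (by simp; omega) ?_
  simp only [precedenceSeq, splitKeys, map_cons, map_map]
  simp only [splitKey_lt_splitKey_iff_of_notMem (slot := fun _ => 0) hx hy rfl, neg_lt_neg_iff,
    Nat.cast_lt]
  refine .cons_cons _ (.cons_cons _ (singleton_sublist.2 (mem_map.2 ⟨0, ?_, ?_⟩)))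
  · exact mem_range.2 (Nat.mul_pos two_pos (Fintype.card_pos_iff.2 ⟨x⟩))
  · simp [splitKey_lt_splitKey_iff_of_notMem hx hy hsweep]

end SplitKeys

/-- every finite split graph (the vertex set is partitioned into a clique `A`
and an independent set `B`) is permutationally 1-11-representable. -/
theorem stmt5 {V : Type*} [Fintype V] [DecidableEq V] (G : SimpleGraph V)
    (A B : Set V) (hcover : A ∪ B = Set.univ) (hdisj : Disjoint A B)
    (hclique : G.IsClique A)
    (hindep : ∀ x ∈ B, ∀ y ∈ B, ¬ G.Adj x y) :
    PermRepresentable 1 G := by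
  have hmem : ∀ v, v ∈ A ∨ v ∈ B := fun v => (Set.ext_iff.1 hcover v).2 trivial
  have hnotMem : ∀ v ∈ B, v ∉ A := fun v hB hA => Set.disjoint_left.1 hdisj hA hB
  have hinj : ∀ κ ∈ splitKeys G A, Function.Injective κ := fun _ => injective_of_mem_splitKeys
  refine permRepresentable_of_precedenceSeq 1 G (splitKeys G A) (cons_ne_nil _ _) hinj
    fun x y hxy => ?_
  rcases hmem x with hx | hx <;> rcases hmem y with hy | hy
  · simp [hclique hx hy hxy, changeCount_precedenceSeq_splitKeys_of_mem hx hy]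
  · exact adj_iff_changeCount_precedenceSeq_splitKeys_le_one hx (hnotMem y hy)
  · rw [G.adj_comm, changeCount_precedenceSeq_comm hinj hxy.symm]
    exact adj_iff_changeCount_precedenceSeq_splitKeys_le_one hy (hnotMem x hx)
  · have := two_le_changeCount_precedenceSeq_splitKeys G (hnotMem x hx) (hnotMem y hy) hxy
    simp only [hindep x hx y hy, false_iff]
    omega
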